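/- Let G be a signed graph with signed adjacency matrix A, unsigned adjacency matrix Ā = |A|, and Gremban adjacency matrix 𝒜. Then the characteristic polynomial of 𝒜 factors as χ_𝒜(λ) = χ_Ā(λ)·χ_A(λ); consequently det(𝒜) = det(Ā)·det(A) and the spectral radius satisfies ρ(𝒜) = max{ρ(Ā), ρ(A)}. -/

import Mathlib

/-!
Subtracting the first block row from the second and then adding the second block column to the
first are unimodular operations turning `[[P, N], [N, P]]` into the block upper triangular
`[[P + N, N], [0, P - N]]`, over any commutative ring. Applied to the characteristic matrix of
`𝒜 = [[A⁺, A⁻], [A⁻, A⁺]]`, where `A⁺ + A⁻ = Ā` and `A⁺ - A⁻ = A`, this gives `χ_𝒜 = χ_Ā · χ_A`;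
the determinant and the spectrum (the roots of `χ`) then split accordingly.
-/

/-- A signed graph: a simple graph together with a symmetric `±1`-valued sign function
on its edges. -/
structure SignedGraph (V : Type*) where
  G : SimpleGraph V
  sign : V → V → ℤ
  sign_symm : ∀ u v, sign u v = sign v u
  sign_pm : ∀ u v, G.Adj u v → sign u v = 1 ∨ sign u v = -1

namespace SignedGraph

variable {V : Type*} (S : SignedGraph V)

/-- The Gremban expansion of a signed graph: each vertex `v` is doubled into the two
polarities `(v, true)` (positive) and `(v, false)` (negative); a positive edge lifts to
two edges between equal polarities, and a negative edge to two edges between opposite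
polarities. -/
def gremban : SimpleGraph (V × Bool) where
  Adj x y := S.G.Adj x.1 y.1 ∧ ((x.2 = y.2) ↔ S.sign x.1 y.1 = 1)
  symm := by
    constructor
    rintro ⟨u, a⟩ ⟨v, b⟩ ⟨h, hs⟩
    refine ⟨h.symm, ?_⟩
    rw [S.sign_symm v u, eq_comm]
    exact hs
  loopless := by
    constructor
    rintro ⟨u, a⟩ ⟨h, _⟩
    exact S.G.irrefl h

/-- The Gremban involution, swapping the two polarities of every vertex. -/
def eta : V × Bool → V × Bool := fun x => (x.1, !x.2)

end SignedGraph

open SignedGraph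

namespace SignedGraph

variable {V : Type*} [Fintype V] [DecidableEq V]

open Classical in
/-- The signed adjacency matrix of a signed graph. -/
noncomputable def adjMat (S : SignedGraph V) : Matrix V V ℝ :=
  fun u v => if S.G.Adj u v then (S.sign u v : ℝ) else 0

/-- The positive part `A⁺ = max(A, 0)` of the signed adjacency matrix. -/
noncomputable def adjPos (S : SignedGraph V) : Matrix V V ℝ :=
  fun u v => max (S.adjMat u v) 0

/-- The negative part `A⁻ = max(−A, 0)` of the signed adjacency matrix. -/
noncomputable def adjNeg (S : SignedGraph V) : Matrix V V ℝ :=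
  fun u v => max (-S.adjMat u v) 0

/-- The Gremban adjacency matrix `𝒜 = [[A⁺, A⁻],[A⁻, A⁺]]`, which is the adjacency
matrix of the Gremban expansion. -/
noncomputable def grembanAdj (S : SignedGraph V) : Matrix (V ⊕ V) (V ⊕ V) ℝ :=
  Matrix.fromBlocks (S.adjPos) (S.adjNeg) (S.adjNeg) (S.adjPos)

/-- A signed graph is balanced if some switching function `θ : V → {±1}` makes all edge
signs positive. -/
def BalancedSw (S : SignedGraph V) : Prop :=
  ∃ θ : V → ℤ, (∀ v, θ v = 1 ∨ θ v = -1) ∧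
    ∀ u v, S.G.Adj u v → θ u * θ v * S.sign u v = 1

end SignedGraph

open Matrix Polynomial

namespace Matrix

variable {n : Type*} [Fintype n] [DecidableEq n]

theorem det_fromBlocks_self_swap {R : Type*} [CommRing R] (P N : Matrix n n R) :
    (fromBlocks P N N P).det = (P + N).det * (P - N).det := by
  have htri : fromBlocks 1 0 (-1) 1 * fromBlocks P N N P * fromBlocks 1 0 1 1 =
      fromBlocks (P + N) N 0 (P - N) := by
    simp only [fromBlocks_multiply, fromBlocks_inj]
    refine ⟨?_, ?_, ?_, ?_⟩ <;> noncomm_ring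
  have hdet := congrArg det htri
  rwa [det_mul, det_mul, det_fromBlocks_zero₁₂, det_fromBlocks_zero₁₂, det_fromBlocks_zero₂₁,
    det_one, one_mul, one_mul, mul_one] at hdet

theorem charpoly_fromBlocks_self_swap {R : Type*} [CommRing R] (P N : Matrix n n R) :
    (fromBlocks P N N P).charpoly = (P + N).charpoly * (P - N).charpoly := by
  have hadd : charmatrix P + -N.map C = charmatrix (P + N) := by
    ext i j
    by_cases hij : i = j <;> simp [hij] <;> ring
  have hsub : charmatrix P - -N.map C = charmatrix (P - N) := by
    ext i j
    by_cases hij : i = j <;> simp [hij] <;> ring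
  rw [charpoly, charmatrix_fromBlocks, det_fromBlocks_self_swap, hadd, hsub, charpoly, charpoly]

theorem spectrum_fromBlocks_self_swap {K : Type*} [Field K] (P N : Matrix n n K) :
    spectrum K (fromBlocks P N N P) = spectrum K (P + N) ∪ spectrum K (P - N) := by
  ext r
  simp only [mem_spectrum_iff_isRoot_charpoly, charpoly_fromBlocks_self_swap, Set.mem_union,
    IsRoot.def, eval_mul, mul_eq_zero]

theorem spectralRadius_fromBlocks_self_swap {𝕜 : Type*} [NormedField 𝕜] (P N : Matrix n n 𝕜) :
    spectralRadius 𝕜 (fromBlocks P N N P) =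
      max (spectralRadius 𝕜 (P + N)) (spectralRadius 𝕜 (P - N)) := by
  simp only [spectralRadius, spectrum_fromBlocks_self_swap, iSup_union]

end Matrix

namespace SignedGraph

theorem adjPos_sub_adjNeg {V : Type*} (S : SignedGraph V) : S.adjPos - S.adjNeg = S.adjMat := by
  ext u v
  exact max_zero_sub_max_neg_zero_eq_self (S.adjMat u v)

end SignedGraph

/-- For a signed graph `G` with signed adjacency matrix `A`, unsigned adjacency matrix
`Ā = A⁺ + A⁻` and Gremban adjacency matrix `𝒜`, the characteristic polynomial of `𝒜`
factors as `χ_𝒜 = χ_Ā · χ_A`; consequently `det 𝒜 = det Ā · det A` and the spectral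
radius satisfies `ρ(𝒜) = max{ρ(Ā), ρ(A)}`. -/
theorem gremban_adj_charpoly_det_specRadius {V : Type*} [Fintype V] [DecidableEq V]
    (S : SignedGraph V) :
    (S.grembanAdj).charpoly = (S.adjPos + S.adjNeg).charpoly * (S.adjMat).charpoly ∧
    (S.grembanAdj).det = (S.adjPos + S.adjNeg).det * (S.adjMat).det ∧
    spectralRadius ℝ (S.grembanAdj) =
      max (spectralRadius ℝ (S.adjPos + S.adjNeg)) (spectralRadius ℝ (S.adjMat)) := by
  rw [grembanAdj, charpoly_fromBlocks_self_swap, det_fromBlocks_self_swap,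
    spectralRadius_fromBlocks_self_swap, S.adjPos_sub_adjNeg]
  exact ⟨rfl, rfl, rfl⟩
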